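/- arXiv:1604.04884 — 4 statements merged into one kernel-verified Lean document; each statement's English description precedes it below -/
import Mathlib

section
/- Let q' be a positive integer, and let w, W be integers. Suppose x, X are coprime integers and a, b are integers coprime to q' satisfying x·a ≡ w, X·a ≡ W (mod q') and x·b ≡ w, X·b ≡ W (mod q'). Then a ≡ b (mod q'/(gcd(x,q')·gcd(X,q'))). In particular, since gcd(x,q') and gcd(X,q') are coprime, the residue of a modulo q'/(gcd(x,q')·gcd(X,q')) is uniquely determined. -/
theorem Int.ediv_dvd_ediv_left {k m n : ℤ} (hmk : m ∣ k) (hnm : n ∣ m) : k / m ∣ k / n := by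
  obtain ⟨s, rfl⟩ := hnm
  obtain ⟨t, rfl⟩ := hmk
  rcases eq_or_ne n 0 with rfl | hn
  · simp
  rcases eq_or_ne s 0 with rfl | hs
  · simp
  rw [Int.mul_ediv_cancel_left _ (mul_ne_zero hn hs), mul_assoc, Int.mul_ediv_cancel_left _ hn]
  exact dvd_mul_left t s

theorem Int.gcd_mul_gcd_dvd_of_gcd_eq_one {x y : ℤ} (n : ℤ) (hxy : Int.gcd x y = 1) :
    (Int.gcd x n : ℤ) * Int.gcd y n ∣ n := by
  have hcop : IsCoprime (Int.gcd x n : ℤ) (Int.gcd y n) :=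
    ((Int.isCoprime_iff_gcd_eq_one.2 hxy).of_isCoprime_of_dvd_left
      (Int.gcd_dvd_left _ _)).of_isCoprime_of_dvd_right (Int.gcd_dvd_left _ _)
  exact hcop.mul_dvd (Int.gcd_dvd_right _ _) (Int.gcd_dvd_right _ _)

theorem stmt_3_general (q' : ℤ) (hq' : 0 < q') (w x X a b : ℤ)
    (hxX : Int.gcd x X = 1)
    (h1 : q' ∣ (x * a - w))
    (h3 : q' ∣ (x * b - w)) :
    (q' / ((Int.gcd x q' : ℤ) * (Int.gcd X q' : ℤ))) ∣ (a - b) := by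
  have hmul : x * a ≡ x * b [ZMOD q'] :=
    (Int.modEq_iff_dvd.2 h1).symm.trans (Int.modEq_iff_dvd.2 h3)
  have hcancel : a ≡ b [ZMOD q' / Int.gcd x q'] := by
    simpa only [Int.gcd_comm q' x] using Int.ModEq.cancel_left_div_gcd hq' hmul
  exact (Int.ediv_dvd_ediv_left (Int.gcd_mul_gcd_dvd_of_gcd_eq_one q' hxX)
    (dvd_mul_right _ _)).trans (dvd_sub_comm.1 (Int.modEq_iff_dvd.1 hcancel))

theorem stmt_3 (q' : ℤ) (hq' : 0 < q') (w W x X a b : ℤ)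
    (hxX : Int.gcd x X = 1)
    (ha : Int.gcd a q' = 1) (hb : Int.gcd b q' = 1)
    (h1 : q' ∣ (x * a - w)) (h2 : q' ∣ (X * a - W))
    (h3 : q' ∣ (x * b - w)) (h4 : q' ∣ (X * b - W)) :
    (q' / ((Int.gcd x q' : ℤ) * (Int.gcd X q' : ℤ))) ∣ (a - b) :=
  stmt_3_general q' hq' w x X a b hxX h1 h3
end

section
/- Let q, q' be positive integers, set p = gcd(q', q), q'₀ = q'/p, q₀ = q/p, and 𝔮 = q'·q/p. Let a, a' be integers with gcd(a,q) = gcd(a',q') = 1, and let x, X, y, Y, t, T be integers satisfying a'·q₀·x − a·q'₀·y ≡ t (mod 𝔮) and a'·q₀·X − a·q'₀·Y ≡ T (mod 𝔮). Then q'₀ divides x·T − X·t and q₀ divides y·T − Y·t. -/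
/-! Modulo `q'₀`, which divides `𝔮`, the two congruences read `a' q₀ x ≡ t` and `a' q₀ X ≡ T`,
so `x T ≡ a' q₀ x X ≡ X t`; modulo `q₀` the same cross-multiplication with the `y`-terms gives
the second divisibility. -/

theorem dvd_mul_sub_mul_of_dvd_sub {R : Type*} [CommRing R] {m c d x X y Y t T : R}
    (hd : m ∣ d) (h : m ∣ c * x - d * y - t) (H : m ∣ c * X - d * Y - T) :
    m ∣ x * T - X * t := by
  have e : x * T - X * t =
      X * (c * x - d * y - t) - x * (c * X - d * Y - T) + d * (X * y - x * Y) := by ring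
  rw [e]
  exact ((h.mul_left X).sub (H.mul_left x)).add (hd.mul_right _)

theorem stmt_5_general (q q' : ℤ)
    (a a' x X y Y t T : ℤ)
    (h1 : (q' * q / (Int.gcd q' q : ℤ)) ∣
      (a' * (q / (Int.gcd q' q : ℤ)) * x - a * (q' / (Int.gcd q' q : ℤ)) * y - t))
    (h2 : (q' * q / (Int.gcd q' q : ℤ)) ∣
      (a' * (q / (Int.gcd q' q : ℤ)) * X - a * (q' / (Int.gcd q' q : ℤ)) * Y - T)) :
    (q' / (Int.gcd q' q : ℤ)) ∣ (x * T - X * t) ∧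
    (q / (Int.gcd q' q : ℤ)) ∣ (y * T - Y * t) := by
  set p : ℤ := (Int.gcd q' q : ℤ)
  have hq'₀ : q' / p ∣ q' * q / p := by
    rw [Int.mul_ediv_assoc' q (Int.gcd_dvd_left q' q)]
    exact dvd_mul_right _ _
  have hq₀ : q / p ∣ q' * q / p := by
    rw [Int.mul_ediv_assoc q' (Int.gcd_dvd_right q' q)]
    exact dvd_mul_left _ _
  constructor
  · exact dvd_mul_sub_mul_of_dvd_sub (dvd_mul_left _ _) (hq'₀.trans h1) (hq'₀.trans h2)
  · have swap : ∀ u v s : ℤ, a' * (q / p) * u - a * (q' / p) * v - s =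
        -(a * (q' / p)) * v - -(a' * (q / p)) * u - s := by
      intros; ring
    rw [swap] at h1 h2
    exact dvd_mul_sub_mul_of_dvd_sub (dvd_mul_left _ _).neg_right (hq₀.trans h1) (hq₀.trans h2)

theorem stmt_5 (q q' : ℤ) (hq : 0 < q) (hq' : 0 < q')
    (a a' x X y Y t T : ℤ)
    (ha : Int.gcd a q = 1) (ha' : Int.gcd a' q' = 1)
    (h1 : (q' * q / (Int.gcd q' q : ℤ)) ∣
      (a' * (q / (Int.gcd q' q : ℤ)) * x - a * (q' / (Int.gcd q' q : ℤ)) * y - t))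
    (h2 : (q' * q / (Int.gcd q' q : ℤ)) ∣
      (a' * (q / (Int.gcd q' q : ℤ)) * X - a * (q' / (Int.gcd q' q : ℤ)) * Y - T)) :
    (q' / (Int.gcd q' q : ℤ)) ∣ (x * T - X * t) ∧
    (q / (Int.gcd q' q : ℤ)) ∣ (y * T - Y * t) :=
  stmt_5_general q q' a a' x X y Y t T h1 h2
end

section
/- Let q, q' be positive integers, p = gcd(q', q), q'₀ = q'/p, q₀ = q/p, 𝔮 = q'·q/p. Let a, a' be integers with gcd(a', q') = 1, and let x, X, y, Y be integers with gcd(x, X) = 1 satisfying a'·q₀·x ≡ a·q'₀·y (mod 𝔮) and a'·q₀·X ≡ a·q'₀·Y (mod 𝔮). Then q'₀ = 1. (Symmetrically, if gcd(y,Y)=1 and gcd(a,q)=1, then q₀ = 1; hence q' = q = 𝔮.) -/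
/-! Write `g = gcd q' q`, `q'₀ = q' / g`, `q₀ = q / g`, so that `q'₀ ∣ 𝔮` and `q'₀` is coprime to
`q₀` and to `a'`. Reducing the congruence `a' q₀ x ≡ a q'₀ y (mod 𝔮)` modulo `q'₀` kills the
right-hand side and leaves `q'₀ ∣ x`; likewise `q'₀ ∣ X`, hence `q'₀ ∣ gcd x X = 1`.
Exchanging the roles of `(q', a', x, X)` and `(q, a, y, Y)` gives `q₀ = 1`. -/

theorem dvd_of_dvd_mul_sub_mul {m c b z w : ℤ} (hmc : IsCoprime m c)
    (h : m ∣ c * z - b * m * w) : m ∣ z :=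
  hmc.dvd_of_dvd_mul_left ((dvd_sub_left ⟨b * w, by ring⟩).mp h)

theorem eq_one_of_dvd_of_dvd_of_isCoprime {m x X : ℤ} (hm : 0 < m) (hxX : IsCoprime x X)
    (hx : m ∣ x) (hX : m ∣ X) : m = 1 :=
  (Int.isUnit_iff.mp (hxX.isUnit_of_dvd' hx hX)).resolve_right (by omega)

theorem div_gcd_eq_one_of_dvd_sub {q q' a a' x X y Y : ℤ} (hq' : 0 < q')
    (ha' : Int.gcd a' q' = 1) (hxX : Int.gcd x X = 1)
    (h1 : (q' * q / (Int.gcd q' q : ℤ)) ∣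
      (a' * (q / (Int.gcd q' q : ℤ)) * x - a * (q' / (Int.gcd q' q : ℤ)) * y))
    (h2 : (q' * q / (Int.gcd q' q : ℤ)) ∣
      (a' * (q / (Int.gcd q' q : ℤ)) * X - a * (q' / (Int.gcd q' q : ℤ)) * Y)) :
    q' / (Int.gcd q' q : ℤ) = 1 := by
  set g : ℤ := (Int.gcd q' q : ℤ)
  have hg_pos : 0 < Int.gcd q' q := Int.gcd_pos_of_ne_zero_left q hq'.ne'
  have hgq' : g ∣ q' := Int.gcd_dvd_left q' q
  have hq'₀_pos : 0 < q' / g := Int.ediv_pos_of_pos_of_dvd hq' (Int.natCast_nonneg _) hgq'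
  have hq'₀_dvd : q' / g ∣ q' * q / g := ⟨q, Int.mul_ediv_assoc' q hgq'⟩
  have hcop : IsCoprime (q' / g) (a' * (q / g)) :=
    ((Int.isCoprime_iff_gcd_eq_one.mpr ha').symm.of_isCoprime_of_dvd_left
      (Int.ediv_dvd_of_dvd hgq')).mul_right
      (Int.isCoprime_iff_gcd_eq_one.mpr (Int.gcd_div_gcd_div_gcd hg_pos))
  exact eq_one_of_dvd_of_dvd_of_isCoprime hq'₀_pos (Int.isCoprime_iff_gcd_eq_one.mpr hxX)
    (dvd_of_dvd_mul_sub_mul hcop (hq'₀_dvd.trans h1))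
    (dvd_of_dvd_mul_sub_mul hcop (hq'₀_dvd.trans h2))

theorem stmt_6 (q q' : ℤ) (hq : 0 < q) (hq' : 0 < q')
    (a a' x X y Y : ℤ)
    (ha : Int.gcd a q = 1) (ha' : Int.gcd a' q' = 1)
    (hxX : Int.gcd x X = 1) (hyY : Int.gcd y Y = 1)
    (h1 : (q' * q / (Int.gcd q' q : ℤ)) ∣
      (a' * (q / (Int.gcd q' q : ℤ)) * x - a * (q' / (Int.gcd q' q : ℤ)) * y))
    (h2 : (q' * q / (Int.gcd q' q : ℤ)) ∣
      (a' * (q / (Int.gcd q' q : ℤ)) * X - a * (q' / (Int.gcd q' q : ℤ)) * Y)) :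
    q' / (Int.gcd q' q : ℤ) = 1 ∧ q / (Int.gcd q' q : ℤ) = 1 ∧
    q' = q ∧ q' * q / (Int.gcd q' q : ℤ) = q := by
  have hq'₀ : q' / (Int.gcd q' q : ℤ) = 1 := div_gcd_eq_one_of_dvd_sub hq' ha' hxX h1 h2
  have hq₀ : q / (Int.gcd q' q : ℤ) = 1 := by
    rw [Int.gcd_comm] at h1 h2 ⊢
    rw [mul_comm q'] at h1 h2
    exact div_gcd_eq_one_of_dvd_sub hq ha hyY (dvd_sub_comm.mp h1) (dvd_sub_comm.mp h2)
  have hq'_eq : q' = Int.gcd q' q := by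
    simpa [hq'₀] using (Int.ediv_mul_cancel (Int.gcd_dvd_left q' q)).symm
  have hq_eq : q = Int.gcd q' q := by
    simpa [hq₀] using (Int.ediv_mul_cancel (Int.gcd_dvd_right q' q)).symm
  refine ⟨hq'₀, hq₀, hq'_eq.trans hq_eq.symm, ?_⟩
  rw [Int.mul_ediv_assoc' q (Int.gcd_dvd_left q' q), hq'₀, one_mul]
end

section
/- Let q', q be positive integers with q'₀ = q'/gcd(q',q) and q₀ = q/gcd(q',q), and let 𝔮 = q'·q/gcd(q',q). Let x, X, y, Y be integers. If a' is coprime to q' and a is any integer such that a'·q₀·x ≡ a·q'₀·y (mod 𝔮) and a'·q₀·X ≡ a·q'₀·Y (mod 𝔮), then q'₀ divides x and q'₀ divides X, and X·y ≡ x·Y (mod q'). -/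
theorem stmt_7 (q q' : ℤ) (hq : 0 < q) (hq' : 0 < q')
    (a a' x X y Y : ℤ) (ha' : Int.gcd a' q' = 1)
    (h1 : (q' * q / (Int.gcd q' q : ℤ)) ∣
      (a' * (q / (Int.gcd q' q : ℤ)) * x - a * (q' / (Int.gcd q' q : ℤ)) * y))
    (h2 : (q' * q / (Int.gcd q' q : ℤ)) ∣
      (a' * (q / (Int.gcd q' q : ℤ)) * X - a * (q' / (Int.gcd q' q : ℤ)) * Y)) :
    (q' / (Int.gcd q' q : ℤ)) ∣ x ∧ (q' / (Int.gcd q' q : ℤ)) ∣ X ∧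
    q' ∣ (X * y - x * Y) := by
  set d : ℤ := (Int.gcd q' q : ℤ) with hd
  have hgpos : 0 < Int.gcd q' q := Int.gcd_pos_of_ne_zero_left q hq'.ne'
  have hd0 : 0 < d := by rw [hd]; exact_mod_cast hgpos
  have hdq' : d ∣ q' := Int.gcd_dvd_left q' q
  have hdq : d ∣ q := Int.gcd_dvd_right q' q
  set q0' : ℤ := q' / d with hq0'
  set q0 : ℤ := q / d with hq0
  have hq0pos : 0 < q0 := Int.ediv_pos_of_pos_of_dvd hq hd0.le hdq
  have hQ : q' * q / d = q' * q0 := Int.mul_ediv_assoc _ hdq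
  have hcop : IsCoprime q0' q0 := by
    rw [Int.isCoprime_iff_gcd_eq_one]
    exact Int.gcd_div_gcd_div_gcd hgpos
  have ha'q' : IsCoprime a' q' := Int.isCoprime_iff_gcd_eq_one.mpr ha'
  have hq0'dvd : q0' ∣ q' := ⟨d, (Int.ediv_mul_cancel hdq').symm⟩
  have ha'q0' : IsCoprime q0' a' := (IsCoprime.of_isCoprime_of_dvd_right ha'q' hq0'dvd).symm
  have hq0'Q : q0' ∣ q' * q0 := Dvd.dvd.mul_right hq0'dvd q0
  rw [hQ] at h1 h2
  have key : ∀ z w : ℤ, q' * q0 ∣ (a' * q0 * z - a * q0' * w) → q0' ∣ z := by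
    intro z w h
    have h3 : q0' ∣ a' * q0 * z - a * q0' * w := dvd_trans hq0'Q h
    have h4 : q0' ∣ a * q0' * w := ⟨a * w, by ring⟩
    have h5 : q0' ∣ a' * q0 * z := by
      have := dvd_add h3 h4
      simpa using this
    have h6 : q0' ∣ z * (a' * q0) := by
      have : a' * q0 * z = z * (a' * q0) := by ring
      rwa [this] at h5
    exact (ha'q0'.mul_right hcop).dvd_of_dvd_mul_right h6
  refine ⟨key x y h1, key X Y h2, ?_⟩
  have hc : q' * q0 ∣ a' * (x * Y - X * y) * q0 := by
    have := dvd_sub (h1.mul_right Y) (h2.mul_right y)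
    have heq : (a' * q0 * x - a * q0' * y) * Y - (a' * q0 * X - a * q0' * Y) * y
        = a' * (x * Y - X * y) * q0 := by ring
    rwa [heq] at this
  have hc2 : q' ∣ a' * (x * Y - X * y) := by
    exact (mul_dvd_mul_iff_right hq0pos.ne').mp hc
  have hc3 : q' ∣ x * Y - X * y := ha'q'.symm.dvd_of_dvd_mul_left hc2
  have : X * y - x * Y = -(x * Y - X * y) := by ring
  rw [this]
  exact hc3.neg_right
end
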